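/- arXiv:0901.3629 — 4 statements merged into one kernel-verified Lean document; each statement's English description precedes it below -/
import Mathlib

section
/- A linear map E from the n×n complex matrices to the m×m complex matrices is completely positive if and only if there exists a finite family of m×n matrices E_k such that E(ρ) = Σ_k E_k ρ E_k* for all ρ. -/
open Matrix
open scoped ComplexOrder Kronecker

/-- The ampliation `E ⊗ id_k` of a linear map `E : M_n(ℂ) → M_m(ℂ)`, acting on
`M_n(ℂ) ⊗ M_k(ℂ)` realized as matrices indexed by `Fin n × Fin k`. -/
def ampliation {n m : ℕ}
    (E : Matrix (Fin n) (Fin n) ℂ →ₗ[ℂ] Matrix (Fin m) (Fin m) ℂ) (k : ℕ)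
    (M : Matrix (Fin n × Fin k) (Fin n × Fin k) ℂ) :
    Matrix (Fin m × Fin k) (Fin m × Fin k) ℂ :=
  fun p q => E (fun i j => M (i, p.2) (j, q.2)) p.1 q.1

/-- A linear map `E : M_n(ℂ) → M_m(ℂ)` is completely positive if `E ⊗ id_k`
is positive for every `k`. -/
def CompletelyPositive {n m : ℕ}
    (E : Matrix (Fin n) (Fin n) ℂ →ₗ[ℂ] Matrix (Fin m) (Fin m) ℂ) : Prop :=
  ∀ (k : ℕ) (M : Matrix (Fin n × Fin k) (Fin n × Fin k) ℂ),
    M.PosSemidef → (ampliation E k M).PosSemidef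

lemma vecMulVec_star_posSemidef {ι : Type*} [Fintype ι] (v : ι → ℂ) :
    (vecMulVec v (star v)).PosSemidef := by
  refine .of_dotProduct_mulVec_nonneg ?_ ?_
  · ext i j; simp [vecMulVec, conjTranspose_apply, mul_comm]
  · intro x
    have h1 : vecMulVec v (star v) *ᵥ x = fun i => v i * (star v ⬝ᵥ x) := by
      ext i; simp [vecMulVec, mulVec, dotProduct, Finset.mul_sum, mul_assoc]
    rw [h1]
    have h2 : star x ⬝ᵥ (fun i => v i * (star v ⬝ᵥ x)) = star (star v ⬝ᵥ x) * (star v ⬝ᵥ x) := by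
      simp [dotProduct, Finset.sum_mul, star_sum, Finset.mul_sum]
      rw [Finset.sum_comm]
      congr 1; ext i; congr 1; ext j; ring
    rw [h2]
    exact star_mul_self_nonneg _

lemma E_expand {n m : ℕ}
    (E : Matrix (Fin n) (Fin n) ℂ →ₗ[ℂ] Matrix (Fin m) (Fin m) ℂ)
    (ρ : Matrix (Fin n) (Fin n) ℂ) (i j : Fin m) :
    E ρ i j = ∑ a, ∑ b, ρ a b * E (Matrix.single a b 1) i j := by
  conv_lhs => rw [matrix_eq_sum_single ρ]
  have : ∀ a b : Fin n, Matrix.single a b (ρ a b) = ρ a b • Matrix.single a b (1:ℂ) := by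
    intro a b; rw [smul_single]; norm_num
  simp_rw [this, map_sum, _root_.map_smul, Matrix.sum_apply, Matrix.smul_apply, smul_eq_mul]

lemma kraus_entry {n m : ℕ} {r : ℕ} (K : Fin r → Matrix (Fin m) (Fin n) ℂ)
    (a b : Fin n) (i j : Fin m) :
    (∑ s, K s * Matrix.single a b (1:ℂ) * (K s)ᴴ) i j = ∑ s, K s i a * star (K s j b) := by
  simp [Matrix.sum_apply, mul_apply, Matrix.single, conjTranspose_apply,
    Finset.sum_ite_eq, ite_and]

lemma ampliation_eq_sum {n m k r : ℕ}
    (E : Matrix (Fin n) (Fin n) ℂ →ₗ[ℂ] Matrix (Fin m) (Fin m) ℂ)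
    (K : Fin r → Matrix (Fin m) (Fin n) ℂ)
    (hE : ∀ ρ, E ρ = ∑ s, K s * ρ * (K s)ᴴ)
    (M : Matrix (Fin n × Fin k) (Fin n × Fin k) ℂ) :
    ampliation E k M =
      ∑ s, (K s ⊗ₖ (1 : Matrix (Fin k) (Fin k) ℂ)) * M * ((K s ⊗ₖ (1 : Matrix (Fin k) (Fin k) ℂ)))ᴴ := by
  ext p q
  change E (Matrix.of fun i j => M (i, p.2) (j, q.2)) p.1 q.1 = _
  rw [hE]
  simp only [Matrix.sum_apply, mul_apply, conjTranspose_apply, kroneckerMap_apply, of_apply,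
    one_apply, Fintype.sum_prod_type, star_mul', mul_ite, ite_mul, mul_one, mul_zero,
    zero_mul, one_mul, apply_ite (star : ℂ → ℂ), star_one, star_zero, Finset.sum_ite_eq, Finset.sum_ite_eq',
    Finset.mem_univ, if_true]

lemma posSemidef_add {N : Type*} [Fintype N] {A B : Matrix N N ℂ}
    (hA : A.PosSemidef) (hB : B.PosSemidef) : (A + B).PosSemidef :=
  .of_dotProduct_mulVec_nonneg (hA.1.add hB.1) fun x => by
    simpa [add_mulVec, dotProduct_add] using add_nonneg (hA.dotProduct_mulVec_nonneg x) (hB.dotProduct_mulVec_nonneg x)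

lemma posSemidef_sum {N ι : Type*} [Fintype N] (s : Finset ι) (f : ι → Matrix N N ℂ)
    (h : ∀ i ∈ s, (f i).PosSemidef) : (∑ i ∈ s, f i).PosSemidef := by
  classical
  induction s using Finset.induction_on with
  | empty => simpa using Matrix.PosSemidef.zero
  | insert _ _ hx ih =>
    rw [Finset.sum_insert hx]
    exact posSemidef_add (h _ (Finset.mem_insert_self _ _))
      (ih fun i hi => h i (Finset.mem_insert_of_mem hi))

/-- Choi's theorem: `E` is completely positive iff it has a Kraus representation
`E ρ = ∑ k, E_k * ρ * E_kᴴ`. -/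
theorem stmt_1 {n m : ℕ}
    (E : Matrix (Fin n) (Fin n) ℂ →ₗ[ℂ] Matrix (Fin m) (Fin m) ℂ) :
    CompletelyPositive E ↔
      ∃ (r : ℕ) (K : Fin r → Matrix (Fin m) (Fin n) ℂ),
        ∀ ρ, E ρ = ∑ k, K k * ρ * (K k)ᴴ := by
  constructor
  · intro hCP
    set Ω : Fin n × Fin n → ℂ := fun x => if x.1 = x.2 then 1 else 0 with hΩ
    have hC := hCP n _ (vecMulVec_star_posSemidef Ω)
    have key : ∀ (a b : Fin n) (i j : Fin m),
        ampliation E n (vecMulVec Ω (star Ω)) (i, a) (j, b) = E (Matrix.single a b 1) i j := by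
      intro a b i j
      show E (fun i' j' => vecMulVec Ω (star Ω) (i', a) (j', b)) i j = _
      have harg : (fun i' j' => vecMulVec Ω (star Ω) (i', a) (j', b)) =
          Matrix.single a b (1 : ℂ) := by
        ext i' j'
        simp only [vecMulVec, hΩ, Matrix.single, of_apply, Pi.star_apply,
          apply_ite (star : ℂ → ℂ), star_one, star_zero, mul_ite, ite_mul,
          mul_one, mul_zero, one_mul, zero_mul, eq_comm]
        split_ifs <;> simp_all
      rw [harg]
    obtain ⟨B, hB⟩ : ∃ B : Matrix (Fin m × Fin n) (Fin m × Fin n) ℂ,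
        ampliation E n (vecMulVec Ω (star Ω)) = Bᴴ * B := by
      open MatrixOrder in
      exact CStarAlgebra.nonneg_iff_eq_star_mul_self.mp hC.nonneg
    have hC' : ∀ (a b : Fin n) (i j : Fin m),
        E (Matrix.single a b 1) i j = ∑ s : Fin m × Fin n, star (B s (i, a)) * B s (j, b) := by
      intro a b i j
      rw [← key, hB]
      simp [mul_apply, conjTranspose_apply]
    refine ⟨m * n, fun t => Matrix.of fun i a => star (B (finProdFinEquiv.symm t) (i, a)), fun ρ => ?_⟩
    ext i j
    rw [E_expand]
    simp_rw [hC', Finset.mul_sum]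
    simp only [Matrix.sum_apply, mul_apply, conjTranspose_apply, star_star, of_apply]
    rw [Equiv.sum_comp (finProdFinEquiv.symm :
      Fin (m * n) ≃ Fin m × Fin n)
      (fun s => ∑ x : Fin n, (∑ x_1 : Fin n, star (B s (i, x_1)) * ρ x_1 x) * B s (j, x))]
    simp_rw [Finset.sum_mul]
    rw [Finset.sum_comm]
    conv_rhs => rw [Finset.sum_comm]
    refine Finset.sum_congr rfl fun b _ => ?_
    rw [Finset.sum_comm]
    exact Finset.sum_congr rfl fun s _ => Finset.sum_congr rfl fun a _ => by ring
  · rintro ⟨r, K, hK⟩ k M hM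
    rw [ampliation_eq_sum E K hK M]
    exact posSemidef_sum _ _ fun s _ => hM.mul_mul_conjTranspose_same _
end

section
/- Let E*(A) = Σ_k E_k* A E_k be the dual of a quantum channel (so Σ_k E_k* E_k = 1) on a finite-dimensional Hilbert space, and let P be a projection. If there exists an effect B (an operator with 0 ≤ B ≤ 1) such that E*(B) = P, then B E_k = E_k P for every k. -/
open Matrix
open scoped ComplexOrder

/-- If `P` is a projection preserved by the dual channel, i.e. `∑ k, (E k)ᴴ * B * (E k) = P`
for some effect `B` (`0 ≤ B ≤ 1`), then `B * E k = E k * P` for every `k`. -/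
theorem stmt_2 {d n : ℕ} (E : Fin n → Matrix (Fin d) (Fin d) ℂ)
    (hE : ∑ k, (E k)ᴴ * E k = 1)
    (P : Matrix (Fin d) (Fin d) ℂ) (hPherm : Pᴴ = P) (hPproj : P * P = P)
    (B : Matrix (Fin d) (Fin d) ℂ)
    (hB₀ : B.PosSemidef) (hB₁ : (1 - B).PosSemidef)
    (h : ∑ k, (E k)ᴴ * B * E k = P) :
    ∀ k, B * E k = E k * P := by
  have sum_mv : ∀ (M : Fin n → Matrix (Fin d) (Fin d) ℂ) (v : Fin d → ℂ),
      (∑ k, M k) *ᵥ v = ∑ k, (M k) *ᵥ v := by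
    intro M v; ext i
    simp only [Matrix.mulVec, dotProduct, Matrix.sum_apply, Finset.sum_apply, Finset.sum_mul]
    rw [Finset.sum_comm]
  have dp_sum : ∀ (v : Fin d → ℂ) (w : Fin n → (Fin d → ℂ)),
      v ⬝ᵥ (∑ k, w k) = ∑ k, v ⬝ᵥ w k := by
    intro v w
    simp only [dotProduct, Finset.sum_apply, Finset.mul_sum]
    rw [Finset.sum_comm]
  have key : ∀ (A M : Matrix (Fin d) (Fin d) ℂ) (v : Fin d → ℂ),
      star v ⬝ᵥ (Aᴴ * M * A) *ᵥ v = star (A *ᵥ v) ⬝ᵥ M *ᵥ (A *ᵥ v) := by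
    intro A M v
    rw [star_mulVec, ← Matrix.mulVec_mulVec, ← Matrix.mulVec_mulVec,
      dotProduct_mulVec]
  have expand : ∀ (M : Matrix (Fin d) (Fin d) ℂ) (v : Fin d → ℂ),
      ∑ k, star (E k *ᵥ v) ⬝ᵥ M *ᵥ (E k *ᵥ v)
        = star v ⬝ᵥ (∑ k, (E k)ᴴ * M * E k) *ᵥ v := by
    intro M v
    rw [sum_mv, dp_sum]
    exact Finset.sum_congr rfl fun k _ => (key (E k) M v).symm
  -- On vectors fixed by P, each (1-B) *ᵥ (E k *ᵥ v) = 0.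
  have lemA : ∀ (v : Fin d → ℂ), P *ᵥ v = v → ∀ k, (1 - B) *ᵥ (E k *ᵥ v) = 0 := by
    intro v hv k
    have hsum : ∑ k, star (E k *ᵥ v) ⬝ᵥ (1 - B) *ᵥ (E k *ᵥ v) = 0 := by
      have h1 : ∑ k, star (E k *ᵥ v) ⬝ᵥ (1 : Matrix (Fin d) (Fin d) ℂ) *ᵥ (E k *ᵥ v)
          = star v ⬝ᵥ v := by
        rw [expand]
        simp only [Matrix.mul_one]
        rw [hE, Matrix.one_mulVec]
      have h2 : ∑ k, star (E k *ᵥ v) ⬝ᵥ B *ᵥ (E k *ᵥ v) = star v ⬝ᵥ v := by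
        rw [expand, h, hv]
      have hsplit : ∑ k, star (E k *ᵥ v) ⬝ᵥ (1 - B) *ᵥ (E k *ᵥ v)
          = ∑ k, (star (E k *ᵥ v) ⬝ᵥ (1 : Matrix (Fin d) (Fin d) ℂ) *ᵥ (E k *ᵥ v)
              - star (E k *ᵥ v) ⬝ᵥ B *ᵥ (E k *ᵥ v)) :=
        Finset.sum_congr rfl fun k _ => by
          rw [Matrix.sub_mulVec, dotProduct_sub]
      rw [hsplit, Finset.sum_sub_distrib, h1, h2, sub_self]
    have heach : star (E k *ᵥ v) ⬝ᵥ (1 - B) *ᵥ (E k *ᵥ v) = 0 :=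
      (Finset.sum_eq_zero_iff_of_nonneg
        (fun i _ => hB₁.dotProduct_mulVec_nonneg (E i *ᵥ v))).mp hsum k (Finset.mem_univ k)
    exact (hB₁.dotProduct_mulVec_zero_iff _).mp heach
  -- On vectors killed by P, each B *ᵥ (E k *ᵥ v) = 0.
  have lemB : ∀ (v : Fin d → ℂ), P *ᵥ v = 0 → ∀ k, B *ᵥ (E k *ᵥ v) = 0 := by
    intro v hv k
    have hsum : ∑ k, star (E k *ᵥ v) ⬝ᵥ B *ᵥ (E k *ᵥ v) = 0 := by
      rw [expand, h, hv, dotProduct_zero]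
    have heach : star (E k *ᵥ v) ⬝ᵥ B *ᵥ (E k *ᵥ v) = 0 :=
      (Finset.sum_eq_zero_iff_of_nonneg
        (fun i _ => hB₀.dotProduct_mulVec_nonneg (E i *ᵥ v))).mp hsum k (Finset.mem_univ k)
    exact (hB₀.dotProduct_mulVec_zero_iff _).mp heach
  intro k
  have hvec : ∀ v : Fin d → ℂ, (B * E k) *ᵥ v = (E k * P) *ᵥ v := by
    intro v
    have hA := lemA (P *ᵥ v) (by rw [Matrix.mulVec_mulVec, hPproj]) k
    have hB := lemB (v - P *ᵥ v) (by
      rw [Matrix.mulVec_sub, Matrix.mulVec_mulVec, hPproj, sub_self]) k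
    have hA' : B *ᵥ (E k *ᵥ (P *ᵥ v)) = E k *ᵥ (P *ᵥ v) := by
      rw [Matrix.sub_mulVec, Matrix.one_mulVec, sub_eq_zero] at hA
      exact hA.symm
    have hsplit : v = P *ᵥ v + (v - P *ᵥ v) := by abel
    calc (B * E k) *ᵥ v = B *ᵥ (E k *ᵥ v) := by rw [← Matrix.mulVec_mulVec]
      _ = B *ᵥ (E k *ᵥ (P *ᵥ v)) + B *ᵥ (E k *ᵥ (v - P *ᵥ v)) := by
          conv_lhs => rw [hsplit]
          rw [Matrix.mulVec_add, Matrix.mulVec_add]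
      _ = E k *ᵥ (P *ᵥ v) := by rw [hA', hB, add_zero]
      _ = (E k * P) *ᵥ v := by rw [Matrix.mulVec_mulVec]
  ext i j
  have := congrFun (hvec (Pi.single j 1)) i
  simpa [Matrix.mulVec_single] using this
end

section
/- With the notation of a channel E with Kraus operators E_k on a finite-dimensional Hilbert space, a projection P is preserved by E (i.e., P = Σ_k E_k* B E_k for some effect B with 0 ≤ B ≤ 1) if and only if P commutes with E_i* E_j for all i, j. -/
open Matrix
open scoped ComplexOrder

private lemma psd_finsum {ι : Type*} {d : ℕ} (s : Finset ι)
    (f : ι → Matrix (Fin d) (Fin d) ℂ)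
    (hf : ∀ i ∈ s, (f i).PosSemidef) : (∑ i ∈ s, f i).PosSemidef := by
  classical
  induction s using Finset.induction_on with
  | empty => simpa using (Matrix.PosSemidef.zero (n := Fin d) (R := ℂ))
  | insert _ _ hnot ih =>
    rw [Finset.sum_insert hnot]
    exact ((hf _ (Finset.mem_insert_self _ _)).add
      (ih fun i hi => hf i (Finset.mem_insert_of_mem hi)))

private lemma quad_sum {ι : Type*} {d : ℕ} (s : Finset ι)
    (f : ι → Matrix (Fin d) (Fin d) ℂ) (x : Fin d → ℂ) :
    star x ⬝ᵥ ((∑ i ∈ s, f i) *ᵥ x) = ∑ i ∈ s, star x ⬝ᵥ (f i *ᵥ x) := by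
  classical
  induction s using Finset.induction_on with
  | empty => simp
  | insert _ _ hnot ih =>
    rw [Finset.sum_insert hnot, Finset.sum_insert hnot, add_mulVec, dotProduct_add, ih]

/-- Each summand of a vanishing sum of positive semidefinite matrices vanishes. -/
private lemma psd_sum_eq_zero {ι : Type*} {d : ℕ} {s : Finset ι}
    {f : ι → Matrix (Fin d) (Fin d) ℂ}
    (hf : ∀ i ∈ s, (f i).PosSemidef) (hsum : ∑ i ∈ s, f i = 0) :
    ∀ i ∈ s, f i = 0 := by
  intro i hi
  have hx : ∀ x : Fin d → ℂ, f i *ᵥ x = 0 := by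
    intro x
    rw [← (hf i hi).dotProduct_mulVec_zero_iff]
    have h0 : ∑ j ∈ s, star x ⬝ᵥ (f j *ᵥ x) = 0 := by
      rw [← quad_sum, hsum]; simp
    exact (Finset.sum_eq_zero_iff_of_nonneg fun j hj => (hf j hj).dotProduct_mulVec_nonneg x).mp h0 i hi
  ext a b
  have := congrFun (hx (Pi.single b 1)) a
  simpa [mulVec_single] using this

/-- If `N` is positive semidefinite and `Aᴴ N A = 0` then `N A = 0`. -/
private lemma psd_mul_eq_zero {d : ℕ} {N A : Matrix (Fin d) (Fin d) ℂ}
    (hN : N.PosSemidef) (h : Aᴴ * N * A = 0) : N * A = 0 := by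
  obtain ⟨C, hC⟩ := (by open scoped MatrixOrder in exact CStarAlgebra.nonneg_iff_eq_star_mul_self.mp hN.nonneg :
    ∃ C : Matrix (Fin d) (Fin d) ℂ, N = star C * C)
  rw [star_eq_conjTranspose] at hC
  subst hC
  have h2 : (C * A)ᴴ * (C * A) = 0 := by
    simp only [conjTranspose_mul, mul_assoc] at h ⊢
    exact h
  rw [conjTranspose_mul_self_eq_zero] at h2
  rw [mul_assoc, h2, mul_zero]

/-- A projection `P` is preserved by the channel with Kraus operators `E k`
(i.e. `P = ∑ k, (E k)ᴴ * B * (E k)` for some effect `B`) iff `P` commutes with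
every product `(E i)ᴴ * E j`. -/
theorem stmt_3 {d n : ℕ} (E : Fin n → Matrix (Fin d) (Fin d) ℂ)
    (hE : ∑ k, (E k)ᴴ * E k = 1)
    (P : Matrix (Fin d) (Fin d) ℂ) (hPherm : Pᴴ = P) (hPproj : P * P = P) :
    (∃ B : Matrix (Fin d) (Fin d) ℂ, B.PosSemidef ∧ (1 - B).PosSemidef ∧
        P = ∑ k, (E k)ᴴ * B * E k) ↔
      (∀ i j, P * ((E i)ᴴ * E j) = ((E i)ᴴ * E j) * P) := by
  classical
  have hPpsd : P.PosSemidef := by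
    have := posSemidef_conjTranspose_mul_self P
    rwa [hPherm, hPproj] at this
  set Q : Matrix (Fin d) (Fin d) ℂ := 1 - P with hQdef
  have hQherm : Qᴴ = Q := by
    simp [hQdef, conjTranspose_sub, hPherm]
  have hPQ : P * Q = 0 := by
    simp [hQdef, mul_sub, hPproj]
  have hQQ : Q * Q = Q := by
    rw [hQdef, sub_mul, one_mul, mul_sub, mul_one, hPproj]
    abel
  have hPQ1 : P + Q = 1 := by rw [hQdef]; abel
  constructor
  · rintro ⟨B, hB, h1B, hPsum⟩
    have hBH : Bᴴ = B := hB.1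
    have hmid : ∑ k, (E k)ᴴ * (1 - B) * E k = Q := by
      have hterm : ∀ k : Fin n,
          (E k)ᴴ * (1 - B) * E k = (E k)ᴴ * E k - (E k)ᴴ * B * E k := by
        intro k; rw [mul_sub, mul_one, sub_mul]
      simp_rw [hterm]
      rw [Finset.sum_sub_distrib, hE, ← hPsum]
  -- step 1 : (1-B) kills E k * P
    have hz1 : ∀ k : Fin n, (1 - B) * (E k * P) = 0 := by
      have hsum1 : ∑ k, (E k * P)ᴴ * (1 - B) * (E k * P) = 0 := by
        have e : ∀ k : Fin n, (E k * P)ᴴ * (1 - B) * (E k * P)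
            = Pᴴ * ((E k)ᴴ * (1 - B) * E k) * P := by
          intro k; simp only [conjTranspose_mul, mul_assoc]
        simp_rw [e]
        rw [← Finset.sum_mul, ← Finset.mul_sum, hmid, hPherm, hPQ, zero_mul]
      intro k
      have hk := psd_sum_eq_zero
        (fun k _ => h1B.conjTranspose_mul_mul_same (E k * P)) hsum1 k (Finset.mem_univ k)
      exact psd_mul_eq_zero h1B hk
    -- step 2 : B kills E k * Q
    have hz2 : ∀ k : Fin n, B * (E k * Q) = 0 := by
      have hsum2 : ∑ k, (E k * Q)ᴴ * B * (E k * Q) = 0 := by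
        have e : ∀ k : Fin n, (E k * Q)ᴴ * B * (E k * Q)
            = Qᴴ * ((E k)ᴴ * B * E k) * Q := by
          intro k; simp only [conjTranspose_mul, mul_assoc]
        simp_rw [e]
        rw [← Finset.sum_mul, ← Finset.mul_sum, ← hPsum, hQherm]
        rw [show Q * P * Q = Q * (P * Q) from by rw [mul_assoc], hPQ, mul_zero]
      intro k
      have hk := psd_sum_eq_zero
        (fun k _ => hB.conjTranspose_mul_mul_same (E k * Q)) hsum2 k (Finset.mem_univ k)
      exact psd_mul_eq_zero hB hk
    have hBE : ∀ k : Fin n, B * E k = E k * P := by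
      intro k
      have e1 : B * (E k * P) = E k * P := by
        have h1 := hz1 k
        rw [sub_mul, one_mul, sub_eq_zero] at h1
        exact h1.symm
      calc B * E k = B * (E k * (P + Q)) := by rw [hPQ1, mul_one]
        _ = B * (E k * P) + B * (E k * Q) := by rw [mul_add, mul_add]
        _ = E k * P := by rw [e1, hz2 k, add_zero]
    intro i j
    have key : ∀ a b : Fin n, (E a)ᴴ * E b * P = (E a)ᴴ * B * E b := by
      intro a b
      rw [mul_assoc, ← hBE b, ← mul_assoc]
    have lhs : P * ((E i)ᴴ * E j) = ((E j)ᴴ * E i * P)ᴴ := by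
      simp only [conjTranspose_mul, conjTranspose_conjTranspose, hPherm, mul_assoc]
    rw [lhs, key j i, key i j]
    simp only [conjTranspose_mul, conjTranspose_conjTranspose, hBH, mul_assoc]
  · intro hcomm
    -- the support projection of T := ∑ k, (E k P)(E k P)ᴴ works
    set T : Matrix (Fin d) (Fin d) ℂ := ∑ k, (E k * P) * (E k * P)ᴴ with hTdef
    have hT : T.PosSemidef :=
      psd_finsum _ _ fun k _ => posSemidef_self_mul_conjTranspose (E k * P)
    have hTh : T.IsHermitian := hT.1
    set U : Matrix (Fin d) (Fin d) ℂ := (hTh.eigenvectorUnitary : Matrix (Fin d) (Fin d) ℂ)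
      with hUdef
    have hU1 : U * Uᴴ = 1 := by
      rw [← Matrix.star_eq_conjTranspose]
      exact mem_unitaryGroup_iff.mp hTh.eigenvectorUnitary.2
    have hU2 : Uᴴ * U = 1 := by
      rw [← Matrix.star_eq_conjTranspose]
      exact mem_unitaryGroup_iff'.mp hTh.eigenvectorUnitary.2
    set ev : Fin d → ℝ := hTh.eigenvalues with hevdef
    set g : Fin d → ℂ := fun i => if ev i = 0 then 0 else 1 with hgdef
    set B : Matrix (Fin d) (Fin d) ℂ := U * diagonal g * Uᴴ with hBdef
    have hspec : T = U * diagonal (RCLike.ofReal ∘ ev) * Uᴴ := by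
      rw [← Matrix.star_eq_conjTranspose]
      exact hTh.spectral_theorem
    have hgnn : ∀ i, 0 ≤ g i := by
      intro i
      by_cases h : ev i = 0 <;> simp [hgdef, h]
    have hBpsd : B.PosSemidef :=
      (posSemidef_diagonal_iff.mpr hgnn).mul_mul_conjTranspose_same U
    have h1Beq : 1 - B = U * diagonal (fun i => 1 - g i) * Uᴴ := by
      have hd : diagonal (fun i => 1 - g i) = 1 - diagonal g := by
        rw [← diagonal_one, ← diagonal_sub]
      rw [hd, mul_sub, sub_mul, mul_one, hU1, hBdef]
    have h1Bpsd : (1 - B).PosSemidef := by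
      rw [h1Beq]
      refine (posSemidef_diagonal_iff.mpr fun i => ?_).mul_mul_conjTranspose_same U
      by_cases h : ev i = 0 <;> simp [hgdef, h]
    -- B * T = T
    have hgD : diagonal g * diagonal (RCLike.ofReal ∘ ev)
        = diagonal (RCLike.ofReal ∘ ev) := by
      have hfun : (fun i => g i * (RCLike.ofReal ∘ ev) i) = (RCLike.ofReal ∘ ev) := by
        funext i
        by_cases h : ev i = 0 <;> simp [hgdef, h, Function.comp_apply]
      rw [diagonal_mul_diagonal, hfun]
    have hBT : B * T = T := by
      rw [hspec, hBdef]
      calc U * diagonal g * Uᴴ * (U * diagonal (RCLike.ofReal ∘ ev) * Uᴴ)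
          = U * diagonal g * ((Uᴴ * U) * (diagonal (RCLike.ofReal ∘ ev) * Uᴴ)) := by
            simp only [mul_assoc]
        _ = U * (diagonal g * diagonal (RCLike.ofReal ∘ ev)) * Uᴴ := by
            rw [hU2, one_mul, mul_assoc, mul_assoc, mul_assoc]
        _ = U * diagonal (RCLike.ofReal ∘ ev) * Uᴴ := by rw [hgD]
    -- T * X = 0 → B * X = 0
    have hBX : ∀ X : Matrix (Fin d) (Fin d) ℂ, T * X = 0 → B * X = 0 := by
      intro X hX
      have h1 : diagonal (RCLike.ofReal ∘ ev) * (Uᴴ * X) = 0 := by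
        have h2 : Uᴴ * (T * X) = 0 := by rw [hX, mul_zero]
        rw [hspec] at h2
        calc diagonal (RCLike.ofReal ∘ ev) * (Uᴴ * X)
            = (Uᴴ * U) * diagonal (RCLike.ofReal ∘ ev) * (Uᴴ * X) := by
              rw [hU2, one_mul]
          _ = Uᴴ * (U * diagonal (RCLike.ofReal ∘ ev) * Uᴴ * X) := by
              simp only [mul_assoc]
          _ = 0 := h2
      have h3 : diagonal g * (Uᴴ * X) = 0 := by
        ext i j
        have h4 := congrFun (congrFun h1 i) j
        rw [diagonal_mul] at h4 ⊢
        simp only [Function.comp_apply] at h4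
        by_cases h : ev i = 0
        · simp [hgdef, h]
        · rcases mul_eq_zero.mp h4 with h5 | h5
          · exact absurd h5 (by simpa using h)
          · simp [hgdef, h, h5]
      rw [hBdef]
      calc U * diagonal g * Uᴴ * X = U * (diagonal g * (Uᴴ * X)) := by
            simp only [mul_assoc]
        _ = 0 := by rw [h3, mul_zero]
    -- T * T' = 0 where T' := ∑ k, (E k Q)(E k Q)ᴴ
    set T' : Matrix (Fin d) (Fin d) ℂ := ∑ k, (E k * Q) * (E k * Q)ᴴ with hT'def
    have hTT' : T * T' = 0 := by
      rw [hTdef, hT'def, Finset.sum_mul]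
      refine Finset.sum_eq_zero fun a _ => ?_
      rw [Finset.mul_sum]
      refine Finset.sum_eq_zero fun b _ => ?_
      have h0 : Pᴴ * ((E a)ᴴ * E b) * Q = 0 := by
        rw [hPherm, hcomm a b, mul_assoc, hPQ, mul_zero]
      calc (E a * P) * (E a * P)ᴴ * ((E b * Q) * (E b * Q)ᴴ)
          = (E a * P) * ((Pᴴ * ((E a)ᴴ * E b) * Q) * (E b * Q)ᴴ) := by
            simp only [conjTranspose_mul, mul_assoc]
        _ = 0 := by rw [h0, zero_mul, mul_zero]
    -- B kills E k * Q
    have hBQ : ∀ k : Fin n, B * (E k * Q) = 0 := by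
      have hs : ∑ k, (B * (E k * Q)) * (B * (E k * Q))ᴴ = 0 := by
        have e : ∀ k : Fin n, (B * (E k * Q)) * (B * (E k * Q))ᴴ
            = B * ((E k * Q) * (E k * Q)ᴴ) * Bᴴ := by
          intro k; simp only [conjTranspose_mul, mul_assoc]
        simp_rw [e]
        rw [← Finset.sum_mul, ← Finset.mul_sum, ← hT'def, hBX T' hTT', zero_mul]
      intro k
      have hk := psd_sum_eq_zero
        (fun k _ => posSemidef_self_mul_conjTranspose (B * (E k * Q))) hs k (Finset.mem_univ k)
      exact self_mul_conjTranspose_eq_zero.mp hk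
    -- B fixes E k * P
    have hBP : ∀ k : Fin n, B * (E k * P) = E k * P := by
      have h1BT : (1 - B) * T = 0 := by
        rw [sub_mul, one_mul, hBT, sub_self]
      have hs : ∑ k, ((1 - B) * (E k * P)) * ((1 - B) * (E k * P))ᴴ = 0 := by
        have e : ∀ k : Fin n, ((1 - B) * (E k * P)) * ((1 - B) * (E k * P))ᴴ
            = (1 - B) * ((E k * P) * (E k * P)ᴴ) * (1 - B)ᴴ := by
          intro k; simp only [conjTranspose_mul, mul_assoc]
        simp_rw [e]
        rw [← Finset.sum_mul, ← Finset.mul_sum, ← hTdef, h1BT, zero_mul]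
      intro k
      have hk := psd_sum_eq_zero
        (fun k _ => posSemidef_self_mul_conjTranspose ((1 - B) * (E k * P)))
        hs k (Finset.mem_univ k)
      have h2 := self_mul_conjTranspose_eq_zero.mp hk
      rw [sub_mul, one_mul, sub_eq_zero] at h2
      exact h2.symm
    have hBE : ∀ k : Fin n, B * E k = E k * P := by
      intro k
      calc B * E k = B * (E k * (P + Q)) := by rw [hPQ1, mul_one]
        _ = B * (E k * P) + B * (E k * Q) := by rw [mul_add, mul_add]
        _ = E k * P := by rw [hBP k, hBQ k, add_zero]
    refine ⟨B, hBpsd, h1Bpsd, ?_⟩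
    have e : ∀ k : Fin n, (E k)ᴴ * B * E k = (E k)ᴴ * E k * P := by
      intro k
      rw [mul_assoc, hBE k, ← mul_assoc]
    simp_rw [e]
    rw [← Finset.sum_mul, hE, one_mul]
end

section
/- The map E*(A) = ½(Tr(A)·1 − Aᵀ) on M₃(ℂ) is unital and positive: E*(1) = 1, and if A is positive semidefinite then E*(A) is positive semidefinite. -/
open Matrix
open scoped ComplexOrder

/-- The map `E*(A) = ½ (Tr(A)·1 − Aᵀ)` on `M₃(ℂ)` is unital and positive. -/
theorem stmt_11 :
    (1 / 2 : ℂ) • ((1 : Matrix (Fin 3) (Fin 3) ℂ).trace •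
        (1 : Matrix (Fin 3) (Fin 3) ℂ) - (1 : Matrix (Fin 3) (Fin 3) ℂ)ᵀ) =
      (1 : Matrix (Fin 3) (Fin 3) ℂ) ∧
    ∀ A : Matrix (Fin 3) (Fin 3) ℂ, A.PosSemidef →
      ((1 / 2 : ℂ) • (A.trace • (1 : Matrix (Fin 3) (Fin 3) ℂ) - Aᵀ)).PosSemidef := by
  constructor
  · ext i j
    rcases eq_or_ne i j with h | h <;>
      norm_num [h, Matrix.trace_one, Matrix.one_apply, Matrix.smul_apply, Matrix.sub_apply]
  · intro A hA
    have hB := hA.transpose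
    have hH : (Aᵀ).IsHermitian := hB.1
    set U : Matrix (Fin 3) (Fin 3) ℂ := (hH.eigenvectorUnitary : Matrix (Fin 3) (Fin 3) ℂ)
      with hUdef
    have hUU : U * star U = 1 := Matrix.mem_unitaryGroup_iff.mp hH.eigenvectorUnitary.2
    have hsUU : star U * U = 1 := Matrix.mem_unitaryGroup_iff'.mp hH.eigenvectorUnitary.2
    have hspec : Aᵀ = U * diagonal (RCLike.ofReal ∘ hH.eigenvalues) * star U :=
      hH.spectral_theorem
    have htr : A.trace = ∑ i, (hH.eigenvalues i : ℂ) := by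
      calc A.trace = Aᵀ.trace := (Matrix.trace_transpose A).symm
        _ = (U * diagonal (RCLike.ofReal ∘ hH.eigenvalues) * star U).trace := by
            rw [← hspec]
        _ = (star U * U * diagonal (RCLike.ofReal ∘ hH.eigenvalues)).trace := by
            rw [Matrix.trace_mul_cycle]
        _ = ∑ i, (hH.eigenvalues i : ℂ) := by
            rw [hsUU, one_mul, Matrix.trace_diagonal]
            rfl
    have hdiag : diagonal (fun i => (1/2 : ℂ) * (A.trace - (hH.eigenvalues i : ℂ)))
        = (1/2 : ℂ) • (A.trace • (1 : Matrix (Fin 3) (Fin 3) ℂ)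
            - diagonal (RCLike.ofReal ∘ hH.eigenvalues)) := by
      ext i j
      rcases eq_or_ne i j with h | h <;>
        simp [h, Matrix.one_apply, Matrix.smul_apply, Matrix.sub_apply]
    have key : (1 / 2 : ℂ) • (A.trace • (1 : Matrix (Fin 3) (Fin 3) ℂ) - Aᵀ)
        = U * diagonal (fun i => (1/2 : ℂ) * (A.trace - (hH.eigenvalues i : ℂ))) * star U := by
      rw [hdiag, Matrix.mul_smul, Matrix.smul_mul]
      congr 1
      rw [Matrix.mul_sub, Matrix.sub_mul, ← hspec, Matrix.mul_smul, Matrix.smul_mul, mul_one, hUU]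
    rw [key, Matrix.star_eq_conjTranspose U]
    apply Matrix.PosSemidef.mul_mul_conjTranspose_same
    refine Matrix.posSemidef_diagonal_iff.mpr fun i => ?_
    rw [htr]
    have hc : (1/2:ℂ) * ((∑ j, (hH.eigenvalues j : ℂ)) - (hH.eigenvalues i : ℂ))
        = (((1/2) * ((∑ j, hH.eigenvalues j) - hH.eigenvalues i) : ℝ) : ℂ) := by
      push_cast; ring
    rw [hc, Complex.zero_le_real]
    nlinarith [Finset.single_le_sum (fun j (_ : j ∈ Finset.univ) => hB.eigenvalues_nonneg j)
      (Finset.mem_univ i)]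
end
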